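/- arXiv:1512.02074 — 2 statements merged into one kernel-verified Lean document; each statement's English description precedes it below -/
import Mathlib

section
/- Let V, W be self-adjoint unitaries such that V + W and V − W are invertible, and define X = (V+W)|V+W|^{-1}, Z = (V−W)|V−W|^{-1}. Then X and Z are self-adjoint unitaries and XZ = −ZX. -/
/-!
Both `X` and `Z` are of the form `sgn a = a |a|⁻¹` with `a` self-adjoint and invertible. Since
`|a|` is a continuous function of `a`, it commutes with `a`; hence `sgn a` is self-adjoint and
`(sgn a)² = a² |a|⁻² = 1`. From `V² = W² = 1` one gets `(V + W)(V − W) = −(V − W)(V + W)`. If `a`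
and `b` anticommute, then `b` commutes with `a²`, hence with `|a|⁻¹`, and `a²` commutes with `b²`,
hence `|a|⁻¹` with `|b|⁻¹`; moving the factors `|a|⁻¹, |b|⁻¹` past `a, b` then shows that
`sgn a` and `sgn b` anticommute.
-/

open scoped Ring

theorem Commute.ringInverse_left {M₀ : Type*} [MonoidWithZero M₀] {a b : M₀} (h : Commute a b) :
    Commute a⁻¹ʳ b := by
  by_cases ha : IsUnit a
  · obtain ⟨u, rfl⟩ := ha
    rw [Ring.inverse_unit]
    exact h.units_inv_left
  · rw [Ring.inverse_non_unit _ ha]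
    exact Commute.zero_left b

theorem commute_mul_self_of_mul_eq_neg {R : Type*} [Ring R] {a b : R} (h : a * b = -(b * a)) :
    Commute (a * a) b := by
  rw [commute_iff_eq, mul_assoc, h, mul_neg, ← mul_assoc, h, neg_mul, neg_neg, mul_assoc]

theorem add_mul_sub_eq_neg_sub_mul_add {R : Type*} [Ring R] {a b : R} (h : a * a = b * b) :
    (a + b) * (a - b) = -((a - b) * (a + b)) := by
  simp only [add_mul, mul_sub, sub_mul, mul_add, h]
  abel

section CStarAlgebra

variable {A : Type*} [CStarAlgebra A] [PartialOrder A] [StarOrderedRing A]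

theorem Commute.cfcSqrt {a b : A} (h : Commute a b) : Commute (CFC.sqrt a) b := by
  rw [CFC.sqrt_eq_cfc]
  exact h.cfc_nnreal _

/-- `a |a|⁻¹` with `|a| = √(a a)`; for self-adjoint invertible `a` this is the sign of `a`. -/
noncomputable def selfAdjointSign (a : A) : A :=
  a * (CFC.sqrt (a * a))⁻¹ʳ

theorem commute_ringInverse_cfcSqrt_mul_self (a : A) : Commute (CFC.sqrt (a * a))⁻¹ʳ a :=
  ((Commute.refl a).mul_left (Commute.refl a)).cfcSqrt.ringInverse_left

theorem IsSelfAdjoint.selfAdjointSign {a : A} (ha : IsSelfAdjoint a) :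
    IsSelfAdjoint (selfAdjointSign a) :=
  (ha.commute_iff (CFC.sqrt_nonneg _).isSelfAdjoint.ringInverse).mp
    (commute_ringInverse_cfcSqrt_mul_self a).symm

theorem selfAdjointSign_mul_self {a : A} (ha : IsSelfAdjoint a) (hu : IsUnit a) :
    selfAdjointSign a * selfAdjointSign a = 1 := by
  set S := CFC.sqrt (a * a)
  have hS : S * S = a * a := CFC.sqrt_mul_sqrt_self _ ha.mul_self_nonneg
  have haS : Commute S⁻¹ʳ a := commute_ringInverse_cfcSqrt_mul_self a
  calc a * S⁻¹ʳ * (a * S⁻¹ʳ) = a * (S⁻¹ʳ * a) * S⁻¹ʳ := by simp only [mul_assoc]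
    _ = a * a * (S⁻¹ʳ * S⁻¹ʳ) := by rw [haS.eq]; simp only [mul_assoc]
    _ = a * a * (a * a)⁻¹ʳ := by rw [← Ring.mul_inverse_rev' (Commute.refl S), hS]
    _ = 1 := Ring.mul_inverse_cancel _ (hu.mul hu)

theorem selfAdjointSign_mul_eq_neg {a b : A} (h : a * b = -(b * a)) :
    selfAdjointSign a * selfAdjointSign b = -(selfAdjointSign b * selfAdjointSign a) := by
  have h' : b * a = -(a * b) := by rw [h, neg_neg]
  have hab := commute_mul_self_of_mul_eq_neg h
  have hba := commute_mul_self_of_mul_eq_neg h'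
  set Sa := CFC.sqrt (a * a)
  set Sb := CFC.sqrt (b * b)
  have hSa_b : Commute Sa⁻¹ʳ b := hab.cfcSqrt.ringInverse_left
  have hSb_a : Commute Sb⁻¹ʳ a := hba.cfcSqrt.ringInverse_left
  have hSa_Sb : Commute Sa⁻¹ʳ Sb⁻¹ʳ :=
    (hab.mul_right hab).cfcSqrt.symm.cfcSqrt.symm.ringInverse_ringInverse
  calc a * Sa⁻¹ʳ * (b * Sb⁻¹ʳ) = a * (Sa⁻¹ʳ * b) * Sb⁻¹ʳ := by simp only [mul_assoc]
    _ = a * b * (Sa⁻¹ʳ * Sb⁻¹ʳ) := by rw [hSa_b.eq]; simp only [mul_assoc]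
    _ = -(b * a * (Sb⁻¹ʳ * Sa⁻¹ʳ)) := by rw [h, hSa_Sb.eq, neg_mul]
    _ = -(b * (Sb⁻¹ʳ * a) * Sa⁻¹ʳ) := by rw [hSb_a.eq]; simp only [mul_assoc]
    _ = -(b * Sb⁻¹ʳ * (a * Sa⁻¹ʳ)) := by simp only [mul_assoc]

end CStarAlgebra

/-- For self-adjoint unitaries `V, W` with `V + W` and `V − W` invertible, the
operators `X = (V+W)|V+W|⁻¹` and `Z = (V−W)|V−W|⁻¹` (with `|T| = √(T²)`) are
self-adjoint unitaries and anticommute: `XZ = −ZX`. -/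
theorem stmt5 {H : Type*} [NormedAddCommGroup H] [InnerProductSpace ℂ H] [CompleteSpace H]
    (V W : H →L[ℂ] H)
    (hVsa : ContinuousLinearMap.adjoint V = V) (hV2 : V * V = 1)
    (hWsa : ContinuousLinearMap.adjoint W = W) (hW2 : W * W = 1)
    (hinvP : IsUnit (V + W)) (hinvM : IsUnit (V - W))
    (X Z : H →L[ℂ] H)
    (hX : X = (V + W) * Ring.inverse (CFC.sqrt ((V + W) * (V + W))))
    (hZ : Z = (V - W) * Ring.inverse (CFC.sqrt ((V - W) * (V - W)))) :
    ContinuousLinearMap.adjoint X = X ∧ X * X = 1 ∧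
    ContinuousLinearMap.adjoint Z = Z ∧ Z * Z = 1 ∧
    X * Z = -(Z * X) := by
  have hV : IsSelfAdjoint V := ContinuousLinearMap.isSelfAdjoint_iff'.mpr hVsa
  have hW : IsSelfAdjoint W := ContinuousLinearMap.isSelfAdjoint_iff'.mpr hWsa
  have hP : IsSelfAdjoint (V + W) := hV.add hW
  have hM : IsSelfAdjoint (V - W) := hV.sub hW
  subst hX hZ
  exact ⟨ContinuousLinearMap.isSelfAdjoint_iff'.mp hP.selfAdjointSign,
    selfAdjointSign_mul_self hP hinvP,
    ContinuousLinearMap.isSelfAdjoint_iff'.mp hM.selfAdjointSign,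
    selfAdjointSign_mul_self hM hinvM,
    selfAdjointSign_mul_eq_neg (add_mul_sub_eq_neg_sub_mul_add (hV2.trans hW2.symm))⟩
end

section
/- For any two-qubit state ρ and ±1-valued observables A₀, A₁, B₀, B₁ (self-adjoint unitaries), the CHSH value Tr[ρ(A₀⊗B₀ + A₀⊗B₁ + A₁⊗B₀ − A₁⊗B₁)] is at most 2√2 (Tsirelson's bound), where the observables act on arbitrary finite-dimensional Hilbert spaces H_A, H_B and ρ is a density operator on H_A ⊗ H_B. -/
/-!
Tsirelson's bound comes from a sum-of-squares certificate: for ±1-valued observables `aᵢ`, `bⱼ`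
with every `aᵢ` commuting with every `bⱼ`,
`(√2 a₀ - b₀ - b₁)² + (√2 a₁ - b₀ + b₁)² = 8 - 2√2 C` where `C` is the CHSH operator, so
`2√2 C ≤ 8` as operators. A state is a positive functional of trace one, hence `2√2 ⟨C⟩ ≤ 8`.
On `H_A ⊗ H_B` the observables are `A ⊗ 1` and `1 ⊗ B`, which commute.
-/

open Kronecker
open scoped ComplexOrder
open Matrix

section Algebraic

variable {R : Type*} [Ring R]

def chsh (a₀ a₁ b₀ b₁ : R) : R :=
  a₀ * b₀ + a₀ * b₁ + a₁ * b₀ - a₁ * b₁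

variable [Algebra ℝ R] {a₀ a₁ b₀ b₁ : R}

theorem chsh_sum_of_squares
    (ha₀ : a₀ * a₀ = 1) (ha₁ : a₁ * a₁ = 1) (hb₀ : b₀ * b₀ = 1) (hb₁ : b₁ * b₁ = 1)
    (h₀₀ : Commute a₀ b₀) (h₀₁ : Commute a₀ b₁) (h₁₀ : Commute a₁ b₀) (h₁₁ : Commute a₁ b₁)
    (s : ℝ) :
    (s • a₀ - (b₀ + b₁)) * (s • a₀ - (b₀ + b₁)) + (s • a₁ - (b₀ - b₁)) * (s • a₁ - (b₀ - b₁))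
      = (2 * s ^ 2 + 4) • 1 - (2 * s) • chsh a₀ a₁ b₀ b₁ := by
  simp only [chsh, sub_mul, mul_sub, add_mul, mul_add, smul_mul_assoc, mul_smul_comm,
    ha₀, ha₁, hb₀, hb₁, ← h₀₀.eq, ← h₀₁.eq, ← h₁₀.eq, ← h₁₁.eq]
  module

theorem two_sqrt_two_smul_chsh_le [StarRing R] [PartialOrder R] [StarOrderedRing R]
    [StarModule ℝ R] (ha₀ : IsSelfAdjoint a₀) (ha₁ : IsSelfAdjoint a₁)
    (hb₀ : IsSelfAdjoint b₀) (hb₁ : IsSelfAdjoint b₁)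
    (ha₀u : a₀ * a₀ = 1) (ha₁u : a₁ * a₁ = 1) (hb₀u : b₀ * b₀ = 1) (hb₁u : b₁ * b₁ = 1)
    (h₀₀ : Commute a₀ b₀) (h₀₁ : Commute a₀ b₁) (h₁₀ : Commute a₁ b₀) (h₁₁ : Commute a₁ b₁) :
    (2 * √2) • chsh a₀ a₁ b₀ b₁ ≤ (8 : ℝ) • 1 := by
  have hsos := chsh_sum_of_squares ha₀u ha₁u hb₀u hb₁u h₀₀ h₀₁ h₁₀ h₁₁ √2
  rw [show (2 * √2 ^ 2 + 4 : ℝ) = 8 by norm_num] at hsos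
  rw [← sub_nonneg, ← hsos]
  have hP : IsSelfAdjoint (√2 • a₀ - (b₀ + b₁)) :=
    ((IsSelfAdjoint.all _).smul ha₀).sub (hb₀.add hb₁)
  have hQ : IsSelfAdjoint (√2 • a₁ - (b₀ - b₁)) :=
    ((IsSelfAdjoint.all _).smul ha₁).sub (hb₀.sub hb₁)
  exact add_nonneg hP.mul_self_nonneg hQ.mul_self_nonneg

end Algebraic

section Kronecker

variable {α ι κ : Type*} [CommRing α]

theorem Matrix.IsHermitian.kronecker [StarRing α] {A : Matrix ι ι α} {B : Matrix κ κ α}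
    (hA : A.IsHermitian) (hB : B.IsHermitian) : (A ⊗ₖ B).IsHermitian := by
  rw [IsHermitian, conjTranspose_kronecker, hA.eq, hB.eq]

variable [Fintype ι] [DecidableEq ι] [Fintype κ] [DecidableEq κ]

theorem Matrix.commute_kronecker_one_one_kronecker (A : Matrix ι ι α) (B : Matrix κ κ α) :
    Commute (A ⊗ₖ (1 : Matrix κ κ α)) ((1 : Matrix ι ι α) ⊗ₖ B) := by
  simp only [Commute, SemiconjBy, ← mul_kronecker_mul, Matrix.mul_one, Matrix.one_mul]

theorem Matrix.kronecker_one_mul_kronecker_one_self {A : Matrix ι ι α} (hA : A * A = 1) :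
    A ⊗ₖ (1 : Matrix κ κ α) * A ⊗ₖ (1 : Matrix κ κ α) = 1 := by
  rw [← mul_kronecker_mul, hA, Matrix.mul_one, one_kronecker_one]

theorem Matrix.one_kronecker_mul_one_kronecker_self {B : Matrix κ κ α} (hB : B * B = 1) :
    (1 : Matrix ι ι α) ⊗ₖ B * (1 : Matrix ι ι α) ⊗ₖ B = 1 := by
  rw [← mul_kronecker_mul, hB, Matrix.mul_one, one_kronecker_one]

theorem chsh_kronecker_one_one_kronecker (A₀ A₁ : Matrix ι ι α) (B₀ B₁ : Matrix κ κ α) :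
    chsh (A₀ ⊗ₖ 1) (A₁ ⊗ₖ 1) (1 ⊗ₖ B₀) (1 ⊗ₖ B₁)
      = A₀ ⊗ₖ B₀ + A₀ ⊗ₖ B₁ + A₁ ⊗ₖ B₀ - A₁ ⊗ₖ B₁ := by
  simp only [chsh, ← mul_kronecker_mul, Matrix.mul_one, Matrix.one_mul]

end Kronecker

section Expectation

open scoped MatrixOrder

variable {𝕜 ι : Type*} [RCLike 𝕜] [Fintype ι] [DecidableEq ι] {ρ : Matrix ι ι 𝕜}

theorem Matrix.PosSemidef.trace_mul_nonneg (hρ : ρ.PosSemidef) {M : Matrix ι ι 𝕜}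
    (hM : M.PosSemidef) : 0 ≤ (ρ * M).trace := by
  obtain ⟨B, rfl⟩ := CStarAlgebra.nonneg_iff_eq_star_mul_self.mp hM.nonneg
  rw [← Matrix.mul_assoc, trace_mul_cycle]
  exact (hρ.mul_mul_conjTranspose_same B).trace_nonneg

theorem Matrix.PosSemidef.re_trace_mul_mono (hρ : ρ.PosSemidef) {M N : Matrix ι ι 𝕜}
    (h : M ≤ N) : RCLike.re (ρ * M).trace ≤ RCLike.re (ρ * N).trace := by
  have := (RCLike.nonneg_iff.mp (hρ.trace_mul_nonneg h)).1
  rwa [Matrix.mul_sub, trace_sub, map_sub, sub_nonneg] at this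

end Expectation

/-- Tsirelson's bound: for any density operator `ρ` on `H_A ⊗ H_B` (finite
dimensional) and ±1-valued observables (self-adjoint unitaries) `A₀, A₁` on
`H_A` and `B₀, B₁` on `H_B`, the CHSH value
`Tr[ρ(A₀⊗B₀ + A₀⊗B₁ + A₁⊗B₀ − A₁⊗B₁)]` is at most `2√2`. -/
theorem stmt14 {n m : ℕ}
    (A₀ A₁ : Matrix (Fin n) (Fin n) ℂ) (B₀ B₁ : Matrix (Fin m) (Fin m) ℂ)
    (hA₀ : A₀.IsHermitian) (hA₀u : A₀ * A₀ = 1)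
    (hA₁ : A₁.IsHermitian) (hA₁u : A₁ * A₁ = 1)
    (hB₀ : B₀.IsHermitian) (hB₀u : B₀ * B₀ = 1)
    (hB₁ : B₁.IsHermitian) (hB₁u : B₁ * B₁ = 1)
    (ρ : Matrix (Fin n × Fin m) (Fin n × Fin m) ℂ)
    (hρ : ρ.PosSemidef) (hρtr : ρ.trace = 1) :
    ((ρ * (A₀ ⊗ₖ B₀ + A₀ ⊗ₖ B₁ + A₁ ⊗ₖ B₀ - A₁ ⊗ₖ B₁)).trace).re
      ≤ 2 * Real.sqrt 2 := by
  open scoped MatrixOrder in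
  have hle := two_sqrt_two_smul_chsh_le (R := Matrix (Fin n × Fin m) (Fin n × Fin m) ℂ)
    (hA₀.kronecker isHermitian_one).isSelfAdjoint (hA₁.kronecker isHermitian_one).isSelfAdjoint
    (isHermitian_one.kronecker hB₀).isSelfAdjoint (isHermitian_one.kronecker hB₁).isSelfAdjoint
    (kronecker_one_mul_kronecker_one_self hA₀u) (kronecker_one_mul_kronecker_one_self hA₁u)
    (one_kronecker_mul_one_kronecker_self hB₀u) (one_kronecker_mul_one_kronecker_self hB₁u)
    (commute_kronecker_one_one_kronecker _ _) (commute_kronecker_one_one_kronecker _ _)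
    (commute_kronecker_one_one_kronecker _ _) (commute_kronecker_one_one_kronecker _ _)
  have hexp := hρ.re_trace_mul_mono hle
  rw [chsh_kronecker_one_one_kronecker] at hexp
  simp only [Matrix.mul_smul, trace_smul, hρtr, RCLike.smul_re, RCLike.re_to_complex,
    Complex.one_re, mul_one] at hexp
  have h8 : (8 : ℝ) = 2 * √2 * (2 * √2) := by
    nlinarith [Real.mul_self_sqrt (zero_le_two : (0 : ℝ) ≤ 2)]
  exact le_of_mul_le_mul_left (h8 ▸ hexp) (by positivity)
end
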